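/- arXiv:2506.00910 — 3 statements merged into one kernel-verified Lean document; each statement's English description precedes it below -/
import Mathlib

section
/- Let C ≥ 1, let λ ∈ [0,1), and let y, q ∈ Δ^{C−1} with q_i > 0 for all i, and set p* = λ·y + (1−λ)·q. If p ∈ Δ^{C−1} has p_i > 0 for all i and attains equality λ·CE(y, p) + (1−λ)·D_KL(q ‖ p) = λ·CE(y, p*) + (1−λ)·D_KL(q ‖ p*), then p = p*. In other words, p* is the unique minimizer of the distillation objective L(p) = λ·CE(y, p) + (1−λ)·D_KL(q ‖ p) over the strictly positive part of the simplex. -/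
/-- The probability simplex: nonnegative entries summing to 1. -/
def simplex {C : ℕ} (p : Fin C → ℝ) : Prop :=
  (∀ i, 0 ≤ p i) ∧ ∑ i, p i = 1

/-- Cross-entropy CE(a, p) = -∑ a_i log p_i. -/
noncomputable def crossEntropy {C : ℕ} (a p : Fin C → ℝ) : ℝ :=
  -∑ i, a i * Real.log (p i)

/-- Kullback–Leibler divergence D_KL(q ‖ p) = ∑ q_i log (q_i / p_i). -/
noncomputable def klDiv {C : ℕ} (q p : Fin C → ℝ) : ℝ :=
  ∑ i, q i * Real.log (q i / p i)

lemma distill_expand {C : ℕ} (lam : ℝ) (y q r : Fin C → ℝ)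
    (hqpos : ∀ i, 0 < q i) (hr : ∀ i, 0 < r i) :
    lam * crossEntropy y r + (1 - lam) * klDiv q r
      = (1 - lam) * ∑ i, q i * Real.log (q i)
        - ∑ i, (lam * y i + (1 - lam) * q i) * Real.log (r i) := by
  have hlog : ∀ i, q i * Real.log (q i / r i)
      = q i * Real.log (q i) - q i * Real.log (r i) := fun i => by
    rw [Real.log_div (hqpos i).ne' (hr i).ne']; ring
  simp only [crossEntropy, klDiv, hlog, Finset.sum_sub_distrib]
  have h4 : ∑ i, (lam * y i + (1 - lam) * q i) * Real.log (r i)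
      = lam * ∑ i, y i * Real.log (r i) + (1 - lam) * ∑ i, q i * Real.log (r i) := by
    rw [Finset.mul_sum, Finset.mul_sum, ← Finset.sum_add_distrib]
    exact Finset.sum_congr rfl fun i _ => by ring
  rw [h4]; ring

/-- Uniqueness of the minimizer: if a strictly positive p in the simplex attains the same
distillation loss as p* = λ·y + (1−λ)·q, then p = p*. -/
theorem optimal_distillation_unique (C : ℕ) (hC : 1 ≤ C) (lam : ℝ)
    (hlam0 : 0 ≤ lam) (hlam1 : lam < 1)
    (y q : Fin C → ℝ) (hy : simplex y) (hq : simplex q) (hqpos : ∀ i, 0 < q i)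
    (p : Fin C → ℝ) (hp : simplex p) (hppos : ∀ i, 0 < p i)
    (heq : lam * crossEntropy y p + (1 - lam) * klDiv q p
      = lam * crossEntropy y (fun i => lam * y i + (1 - lam) * q i)
        + (1 - lam) * klDiv q (fun i => lam * y i + (1 - lam) * q i)) :
    p = fun i => lam * y i + (1 - lam) * q i := by
  set s : Fin C → ℝ := fun i => lam * y i + (1 - lam) * q i with hs
  have hspos : ∀ i, 0 < s i := fun i =>
    add_pos_of_nonneg_of_pos (mul_nonneg hlam0 (hy.1 i))
      (mul_pos (by linarith) (hqpos i))
  have hssum : ∑ i, s i = 1 := by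
    simp only [hs]
    rw [Finset.sum_add_distrib, ← Finset.mul_sum, ← Finset.mul_sum, hy.2, hq.2]
    ring
  -- key: ∑ s i * log (p i) = ∑ s i * log (s i)
  have key : ∑ i, s i * Real.log (p i) = ∑ i, s i * Real.log (s i) := by
    have h1 := distill_expand lam y q p hqpos hppos
    have h2 := distill_expand lam y q s hqpos hspos
    rw [h1, h2] at heq
    have := sub_eq_zero.mpr heq
    simp only [hs] at this ⊢
    linarith [this]
  by_contra hne
  have hne' : ∃ j, p j ≠ s j := by
    by_contra h
    push_neg at h
    exact hne (funext h)
  obtain ⟨j, hj⟩ := hne'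
  -- Gibbs: ∑ s i * log (p i / s i) < ∑ (p i - s i) = 0
  have hlt : ∑ i, s i * Real.log (p i / s i) < ∑ i, (p i - s i) := by
    apply Finset.sum_lt_sum
    · intro i _
      have := Real.log_le_sub_one_of_pos (div_pos (hppos i) (hspos i))
      have h2 : s i * Real.log (p i / s i) ≤ s i * (p i / s i - 1) :=
        mul_le_mul_of_nonneg_left this (hspos i).le
      calc s i * Real.log (p i / s i) ≤ s i * (p i / s i - 1) := h2
        _ = p i - s i := by
            rw [mul_sub, mul_one, mul_div_cancel₀ _ (hspos i).ne']
    · refine ⟨j, Finset.mem_univ j, ?_⟩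
      have hne1 : p j / s j ≠ 1 := by
        intro h
        exact hj ((div_eq_one_iff_eq (hspos j).ne').mp h)
      have := Real.log_lt_sub_one_of_pos (div_pos (hppos j) (hspos j)) hne1
      have h2 : s j * Real.log (p j / s j) < s j * (p j / s j - 1) :=
        (mul_lt_mul_iff_right₀ (hspos j)).mpr this
      calc s j * Real.log (p j / s j) < s j * (p j / s j - 1) := h2
        _ = p j - s j := by
            rw [mul_sub, mul_one, mul_div_cancel₀ _ (hspos j).ne']
  have hsum0 : ∑ i, (p i - s i) = 0 := by
    rw [Finset.sum_sub_distrib, hp.2, hssum]; ring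
  have hzero : ∑ i, s i * Real.log (p i / s i) = 0 := by
    have hlog : ∀ i, s i * Real.log (p i / s i)
        = s i * Real.log (p i) - s i * Real.log (s i) := fun i => by
      rw [Real.log_div (hppos i).ne' (hspos i).ne']; ring
    simp only [hlog]
    rw [Finset.sum_sub_distrib, key]
    ring
  rw [hzero, hsum0] at hlt
  exact lt_irrefl 0 hlt
end

section
/- Let C ≥ 1 and K ≥ 1, let λ ∈ [0,1] and ε ≥ 0, and let X be an arbitrary set. Let f : X → Δ^{C−1} (the teacher) and f_r : X → Δ^{C−1} (the student) be functions, let ℓ : X → {1,…,C} assign a class label to each input, and write e_c ∈ Δ^{C−1} for the one-hot vector of class c. Suppose the teacher exhibits structured prediction bias with centroids μ_1, …, μ_K ∈ Δ^{C−1} and radii r_1, …, r_K > 0, i.e., for every x ∈ X there exists k ∈ {1,…,K} with ‖f(x) − μ_k‖₂ ≤ r_k. Suppose further that the student satisfies the ε-convergence bound ‖f_r(x) − (λ·e_{ℓ(x)} + (1−λ)·f(x))‖₁ ≤ ε for every x ∈ X. Then for every x ∈ X there exists k ∈ {1,…,K} such that ‖f_r(x) − (λ·e_{ℓ(x)} +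 (1−λ)·μ_k)‖₂ ≤ (1−λ)·r_k + ε; that is, every student prediction lies in an ℓ²-ball around a propagated centroid λ·e_{ℓ(x)} + (1−λ)·μ_k of radius (1−λ)·r_k + ε. -/
/-- ℓ¹ norm on ℝ^C. -/
noncomputable def l1norm {C : ℕ} (v : Fin C → ℝ) : ℝ := ∑ i, |v i|

/-- ℓ² norm on ℝ^C. -/
noncomputable def l2norm {C : ℕ} (v : Fin C → ℝ) : ℝ := Real.sqrt (∑ i, (v i) ^ 2)

/-- One-hot vector of class c. -/
def onehot {C : ℕ} (c : Fin C) : Fin C → ℝ := fun i => if i = c then 1 else 0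

/-! The student's prediction differs from the propagated centroid `λ e + (1 - λ) μ` by its
distillation error `fr - (λ e + (1 - λ) f)` plus `(1 - λ) (f - μ)`. The triangle inequality in
`ℓ²`, homogeneity, and `‖·‖₂ ≤ ‖·‖₁` bound the two terms by `ε` and `(1 - λ) r`. -/

section l2norm

variable {C : ℕ}

lemma l2norm_eq_norm_toLp (v : Fin C → ℝ) : l2norm v = ‖WithLp.toLp 2 v‖ := by
  simp [l2norm, EuclideanSpace.norm_eq, sq_abs]

lemma l2norm_add_le (u v : Fin C → ℝ) : l2norm (u + v) ≤ l2norm u + l2norm v := by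
  simpa only [l2norm_eq_norm_toLp, WithLp.toLp_add] using norm_add_le _ _

lemma l2norm_smul (c : ℝ) (v : Fin C → ℝ) : l2norm (c • v) = |c| * l2norm v := by
  rw [l2norm_eq_norm_toLp, l2norm_eq_norm_toLp, WithLp.toLp_smul, norm_smul, Real.norm_eq_abs]

lemma l2norm_le_l1norm (v : Fin C → ℝ) : l2norm v ≤ l1norm v := by
  have hsq : ∑ i, v i ^ 2 ≤ (∑ i, |v i|) ^ 2 := by
    simpa only [sq_abs] using
      Finset.sum_sq_le_sq_sum_of_nonneg (s := Finset.univ) fun i _ => abs_nonneg (v i)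
  exact Real.sqrt_le_left (Finset.sum_nonneg fun i _ => abs_nonneg (v i)) |>.mpr hsq

end l2norm

theorem bias_propagation_through_KD_general (C K : ℕ)
    (lam ε : ℝ) (hlam1 : lam ≤ 1)
    (X : Type*) (f fr : X → Fin C → ℝ)
    (lab : X → Fin C)
    (μ : Fin K → Fin C → ℝ) (r : Fin K → ℝ)
    (hbias : ∀ x, ∃ k, l2norm (fun i => f x i - μ k i) ≤ r k)
    (hconv : ∀ x,
      l1norm (fun i => fr x i - (lam * onehot (lab x) i + (1 - lam) * f x i)) ≤ ε) :
    ∀ x, ∃ k, l2norm (fun i => fr x i - (lam * onehot (lab x) i + (1 - lam) * μ k i))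
      ≤ (1 - lam) * r k + ε := by
  intro x
  obtain ⟨k, hk⟩ := hbias x
  refine ⟨k, ?_⟩
  set err : Fin C → ℝ := fun i => fr x i - (lam * onehot (lab x) i + (1 - lam) * f x i)
  have hsplit : (fun i => fr x i - (lam * onehot (lab x) i + (1 - lam) * μ k i))
      = err + (1 - lam) • fun i => f x i - μ k i := by
    funext i
    simp only [err, Pi.add_apply, Pi.smul_apply, smul_eq_mul]
    ring
  calc _ ≤ l2norm err + |1 - lam| * l2norm (fun i => f x i - μ k i) := by
        rw [hsplit, ← l2norm_smul]
        exact l2norm_add_le _ _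
    _ ≤ ε + (1 - lam) * r k := by
        rw [abs_of_nonneg (sub_nonneg.mpr hlam1)]
        gcongr
        exact (l2norm_le_l1norm err).trans (hconv x)
    _ = (1 - lam) * r k + ε := add_comm _ _

/-- Bias propagation through knowledge distillation: if the teacher f exhibits structured
prediction bias with centroids μ_k and radii r_k, and the student f_r is ε-close in ℓ¹ to the
convex combination λ·e_{ℓ(x)} + (1−λ)·f(x), then every student prediction lies in an ℓ²-ball
of radius (1−λ)·r_k + ε around a propagated centroid λ·e_{ℓ(x)} + (1−λ)·μ_k. -/
theorem bias_propagation_through_KD (C K : ℕ) (hC : 1 ≤ C) (hK : 1 ≤ K)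
    (lam ε : ℝ) (hlam0 : 0 ≤ lam) (hlam1 : lam ≤ 1) (hε : 0 ≤ ε)
    (X : Type*) (f fr : X → Fin C → ℝ)
    (hf : ∀ x, simplex (f x)) (hfr : ∀ x, simplex (fr x))
    (lab : X → Fin C)
    (μ : Fin K → Fin C → ℝ) (r : Fin K → ℝ)
    (hμ : ∀ k, simplex (μ k)) (hr : ∀ k, 0 < r k)
    (hbias : ∀ x, ∃ k, l2norm (fun i => f x i - μ k i) ≤ r k)
    (hconv : ∀ x,
      l1norm (fun i => fr x i - (lam * onehot (lab x) i + (1 - lam) * f x i)) ≤ ε) :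
    ∀ x, ∃ k, l2norm (fun i => fr x i - (lam * onehot (lab x) i + (1 - lam) * μ k i))
      ≤ (1 - lam) * r k + ε :=
  bias_propagation_through_KD_general C K lam ε hlam1 X f fr lab μ r hbias hconv
end

section
/- Let C ≥ 1 and K ≥ 1, let λ ∈ [0,1] and ε ≥ 0, let X be a set, let f, f_r : X → Δ^{C−1}, let ℓ : X → {1,…,C}, and let μ_1,…,μ_K ∈ Δ^{C−1} and r_1,…,r_K > 0 be such that: (i) for every x ∈ X there exists k with ‖f(x) − μ_k‖₂ ≤ r_k, and (ii) ‖f_r(x) − (λ·e_{ℓ(x)} + (1−λ)·f(x))‖₁ ≤ ε for every x ∈ X. Consider the set of propagated centroids S = { λ·e_c + (1−λ)·μ_k : c ∈ {1,…,C}, k ∈ {1,…,K} }. Then: (a) S is contained in the probability simplex Δ^{C−1}; (b) S is a finite set of cardinality at most C·K; and (c) for every x ∈ X there exist a centroid μ̂ ∈ S and an index k ∈ {1,…,K} with μ̂ = λ·e_{ℓ(x)} + (1−λ)·μ_k and ‖f_r(x) − μ̂‖₂ ≤ (1−λ)·r_k + ε. Hence the student's predictions are constrained to at most C·K distinct ℓ²-balls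 in the probability simplex. -/
lemma l2_eq_norm {C : ℕ} (v : Fin C → ℝ) :
    l2norm v = ‖(WithLp.equiv 2 (Fin C → ℝ)).symm v‖ := by
  rw [EuclideanSpace.norm_eq]
  simp [l2norm, sq_abs]

lemma l2_triangle {C : ℕ} (a b : Fin C → ℝ) :
    l2norm (fun i => a i + b i) ≤ l2norm a + l2norm b := by
  simp only [l2_eq_norm]
  exact norm_add_le ((WithLp.equiv 2 (Fin C → ℝ)).symm a) ((WithLp.equiv 2 (Fin C → ℝ)).symm b)

lemma l2_smul {C : ℕ} (c : ℝ) (v : Fin C → ℝ) :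
    l2norm (fun i => c * v i) = |c| * l2norm v := by
  simp only [l2norm, mul_pow, ← Finset.mul_sum]
  rw [Real.sqrt_mul (sq_nonneg c), Real.sqrt_sq_eq_abs]

lemma l2_le_l1 {C : ℕ} (v : Fin C → ℝ) : l2norm v ≤ l1norm v := by
  have h : ∑ i, (v i) ^ 2 ≤ (∑ i, |v i|) ^ 2 := by
    calc ∑ i, (v i) ^ 2 = ∑ i, |v i| ^ 2 := by simp [sq_abs]
    _ ≤ (∑ i, |v i|) ^ 2 :=
        Finset.sum_sq_le_sq_sum_of_nonneg (fun i _ => abs_nonneg _)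
  calc l2norm v ≤ Real.sqrt ((∑ i, |v i|) ^ 2) := Real.sqrt_le_sqrt h
  _ = l1norm v := Real.sqrt_sq (Finset.sum_nonneg fun i _ => abs_nonneg _)

/-- Student bias inheritance: the set S of propagated centroids λ·e_c + (1−λ)·μ_k is contained
in the probability simplex, is finite of cardinality at most C·K, and every student prediction
lies in an ℓ²-ball of radius (1−λ)·r_k + ε around some centroid in S. -/
theorem student_bias_inheritance (C K : ℕ) (hC : 1 ≤ C) (hK : 1 ≤ K)
    (lam ε : ℝ) (hlam0 : 0 ≤ lam) (hlam1 : lam ≤ 1) (hε : 0 ≤ ε)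
    (X : Type*) (f fr : X → Fin C → ℝ)
    (hf : ∀ x, simplex (f x)) (hfr : ∀ x, simplex (fr x))
    (lab : X → Fin C)
    (μ : Fin K → Fin C → ℝ) (r : Fin K → ℝ)
    (hμ : ∀ k, simplex (μ k)) (hr : ∀ k, 0 < r k)
    (hbias : ∀ x, ∃ k, l2norm (fun i => f x i - μ k i) ≤ r k)
    (hconv : ∀ x,
      l1norm (fun i => fr x i - (lam * onehot (lab x) i + (1 - lam) * f x i)) ≤ ε)
    (S : Set (Fin C → ℝ))
    (hS : S = {p | ∃ (c : Fin C) (k : Fin K),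
      p = fun i => lam * onehot c i + (1 - lam) * μ k i}) :
    (∀ p ∈ S, simplex p)
    ∧ S.Finite
    ∧ S.ncard ≤ C * K
    ∧ (∀ x, ∃ μhat ∈ S, ∃ k : Fin K,
        μhat = (fun i => lam * onehot (lab x) i + (1 - lam) * μ k i)
        ∧ l2norm (fun i => fr x i - μhat i) ≤ (1 - lam) * r k + ε) := by
  have h1lam : 0 ≤ 1 - lam := by linarith
  refine ⟨?_, ?_, ?_, ?_⟩
  · rintro p hp
    rw [hS] at hp
    obtain ⟨c, k, rfl⟩ := hp
    constructor
    · intro i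
      have := (hμ k).1 i
      have honeh : (0:ℝ) ≤ onehot c i := by unfold onehot; positivity
      positivity
    · rw [Finset.sum_add_distrib, ← Finset.mul_sum, ← Finset.mul_sum, (hμ k).2]
      have : ∑ i, onehot c i = 1 := by simp [onehot]
      rw [this]; ring
  · rw [hS]
    have : {p | ∃ (c : Fin C) (k : Fin K),
        p = fun i => lam * onehot c i + (1 - lam) * μ k i} =
        (fun ck : Fin C × Fin K => fun i => lam * onehot ck.1 i + (1 - lam) * μ ck.2 i) ''
          Set.univ := by
      ext p
      simp [eq_comm]
    rw [this]
    exact Set.finite_univ.image _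
  · rw [hS]
    have : {p | ∃ (c : Fin C) (k : Fin K),
        p = fun i => lam * onehot c i + (1 - lam) * μ k i} =
        (fun ck : Fin C × Fin K => fun i => lam * onehot ck.1 i + (1 - lam) * μ ck.2 i) ''
          Set.univ := by
      ext p
      simp [eq_comm]
    rw [this]
    calc _ ≤ (Set.univ : Set (Fin C × Fin K)).ncard :=
          Set.ncard_image_le Set.finite_univ
    _ = C * K := by
          rw [Set.ncard_univ]
          simp [Nat.card_eq_fintype_card]
  · intro x
    obtain ⟨k, hk⟩ := hbias x
    refine ⟨fun i => lam * onehot (lab x) i + (1 - lam) * μ k i, ?_, k, rfl, ?_⟩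
    · rw [hS]; exact ⟨lab x, k, rfl⟩
    · have key : (fun i => fr x i - (lam * onehot (lab x) i + (1 - lam) * μ k i)) =
          (fun i => (fr x i - (lam * onehot (lab x) i + (1 - lam) * f x i)) +
            (1 - lam) * (f x i - μ k i)) := by
        funext i; ring
      rw [key]
      calc l2norm (fun i => (fr x i - (lam * onehot (lab x) i + (1 - lam) * f x i)) +
            (1 - lam) * (f x i - μ k i))
          ≤ l2norm (fun i => fr x i - (lam * onehot (lab x) i + (1 - lam) * f x i)) +
            l2norm (fun i => (1 - lam) * (f x i - μ k i)) := l2_triangle _ _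
        _ ≤ ε + (1 - lam) * r k := by
            gcongr
            · exact le_trans (l2_le_l1 _) (hconv x)
            · rw [l2_smul, abs_of_nonneg h1lam]
              exact mul_le_mul_of_nonneg_left hk h1lam
        _ = (1 - lam) * r k + ε := by ring
end
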